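/- Let n ≥ 1 and D_1 ≥ 2 be integers, let Q(ζ), S_{ij}, G̃₂(ζ), Θ and κ_1,…,κ_{2n} satisfy all the hypotheses and notation above, with Θ moreover of class C^{κ} up to the boundary of the closed unit disc, where κ = max_j κ_j. If H: {|ζ| ≤ 1} → ℂ^{2n} is of class C^{κ} on the closed unit disc, holomorphic on the open unit disc, satisfies conj(G̃₂(ζ)) · H(ζ) + G̃₂(ζ) · conj(H(ζ)) = 0 for every |ζ| = 1, and has vanishing jet of order κ at ζ = 1 (i.e., H(1) = H'(1) = ⋯ = H^{(κ)}(1) = 0), then H is identically zero. -/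

import Mathlib

/-!
Put `f := Θ H`. On the circle the factorization of `conj G̃₂⁻¹ G̃₂` turns the boundary condition
into `f_p = ζ ^ κ_p * conj f_p`, each `f_p` is holomorphic in the disc, and by Taylor's formula
`f_p = o(|ζ - 1| ^ K)` at `1`. For such a `g` with `k ≤ K`, the quotient
`u = (-1) ^ K ζ ^ (K - k) g² / (ζ - 1) ^ (2K)` equals `|g|² / |ζ - 1| ^ (2K)` on the circle, is
holomorphic in the disc and tends to `0` at `1`. A holomorphic function with real boundary values
is constant (maximum principle for `exp (± i u)`, then the open mapping theorem), so `u = 0`,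
hence `g = 0`, and `H = Θ⁻¹ f = 0`.
-/

open ComplexConjugate

noncomputable section

/-- The `2n × 2n` matrix `G̃₂(ζ)`: rows/columns are indexed by pairs `(i,a)` with
`a = 0` corresponding to the odd row/column `2i−1` and `a = 1` to the even one `2i`. -/
def Gtilde2 (n : ℕ) (Q S : Fin n → Fin n → Polynomial ℂ) (ζ : ℂ) :
    Matrix (Fin n × Fin 2) (Fin n × Fin 2) ℂ :=
  Matrix.of fun p q =>
    if p.2 = 0 then
      (if q.2 = 0 then (if p.1 = q.1 then (1 : ℂ) else 0)
       else (Q p.1 q.1).eval ζ + (S p.1 q.1).eval (conj ζ))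
    else
      (if q.2 = 0 then (if p.1 = q.1 then -Complex.I else 0)
       else Complex.I * ((Q p.1 q.1).eval ζ - (S p.1 q.1).eval (conj ζ)))

open Metric Filter Topology Asymptotics Set Matrix

theorem isLittleO_pow_of_iteratedDerivWithin_eq_zero {𝕜 F : Type*} [RCLike 𝕜]
    [NormedAddCommGroup F] [NormedSpace 𝕜 F] {s : Set 𝕜} {x₀ : 𝕜} {n : ℕ} {u : 𝕜 → F}
    (hs : Convex ℝ s) (hs' : UniqueDiffOn 𝕜 s) (hx₀ : x₀ ∈ s) (hu : ContDiffOn 𝕜 n u s)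
    (hjet : ∀ j ≤ n, iteratedDerivWithin j u s x₀ = 0) :
    u =o[𝓝[s] x₀] fun x => (x - x₀) ^ n := by
  have hu₀ : u x₀ = 0 := by simpa using hjet 0 (Nat.zero_le n)
  induction n generalizing u with
  | zero =>
    have := (hu.continuousOn.continuousWithinAt hx₀).tendsto
    rw [hu₀] at this
    simpa [isLittleO_one_iff] using this
  | succ n ih =>
    have hderiv : derivWithin u s =o[𝓝[s] x₀] fun x => (x - x₀) ^ n := by
      refine ih (hu.derivWithin hs' (by simp)) (fun j hj => ?_) ?_
      · rw [← iteratedDerivWithin_succ']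
        exact hjet (j + 1) (by omega)
      · simpa [iteratedDerivWithin_one] using hjet 1 (by omega)
    have := hs.isLittleO_pow_succ hx₀ (f := u)
      (f' := fun x => ContinuousLinearMap.toSpanSingleton 𝕜 (derivWithin u s x))
      (fun x hx => ((hu.differentiableOn (by simp) x hx).hasDerivWithinAt).hasFDerivWithinAt)
      (n := n) ?_
    · simpa [hu₀, ← isLittleO_norm_right (g' := fun x => (x - x₀) ^ (n + 1))] using this
    · rw [← isLittleO_norm_left]
      simpa [ContinuousLinearMap.norm_toSpanSingleton,
        ← isLittleO_norm_right (g' := fun x => (x - x₀) ^ n)] using hderiv.norm_left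

theorem Asymptotics.IsLittleO.apply_eq_zero_of_mem {α E F : Type*} [TopologicalSpace α]
    [NormedAddCommGroup E] [SeminormedAddCommGroup F] {f : α → E} {g : α → F} {s : Set α} {x : α}
    (h : f =o[𝓝[s] x] g) (hx : x ∈ s) : f x = 0 := by
  by_contra hne
  have hpos : 0 < ‖f x‖ := norm_pos_iff.mpr hne
  have hb := (h.bound (c := ‖f x‖ / (‖g x‖ + 1)) (by positivity)).self_of_nhdsWithin hx
  rw [div_mul_eq_mul_div, le_div_iff₀ (by positivity)] at hb
  nlinarith

theorem Asymptotics.isLittleO_mulVec_apply {α ι 𝕜 : Type*} [Fintype ι] [NormedField 𝕜]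
    {l : Filter α} {M : α → Matrix ι ι 𝕜} {v : α → ι → 𝕜} {φ : α → 𝕜}
    (hM : ∀ i j, (fun x => M x i j) =O[l] fun _ => (1 : 𝕜)) (hv : ∀ j, (fun x => v x j) =o[l] φ)
    (i : ι) : (fun x => (M x *ᵥ v x) i) =o[l] φ := by
  simp only [Matrix.mulVec, dotProduct]
  exact IsLittleO.fun_sum fun j _ => by simpa using (hM i j).mul_isLittleO (hv j)

theorem DiffContOnCl.re_le_of_forall_mem_frontier_re_le {u : ℂ → ℂ} {U : Set ℂ}
    (hU : Bornology.IsBounded U) (hu : DiffContOnCl ℂ u U) {C : ℝ}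
    (hC : ∀ z ∈ frontier U, (u z).re ≤ C) {z : ℂ} (hz : z ∈ closure U) : (u z).re ≤ C := by
  have hexp : DiffContOnCl ℂ (fun z => Complex.exp (u z)) U :=
    Complex.differentiable_exp.comp_diffContOnCl hu
  have := Complex.norm_le_of_forall_mem_frontier_norm_le hU hexp (C := Real.exp C)
    (fun z hz => by simpa [Complex.norm_exp] using hC z hz) hz
  simpa [Complex.norm_exp] using this

theorem Complex.eq_empty_of_isOpen_of_subset_im_eq_zero {V : Set ℂ} (hV : IsOpen V)
    (hVℝ : ∀ z ∈ V, z.im = 0) : V = ∅ := by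
  refine eq_empty_iff_forall_notMem.mpr fun w hw => ?_
  obtain ⟨ε, hε, hball⟩ := Metric.isOpen_iff.mp hV w hw
  have hmem : w + (ε / 2 : ℝ) * I ∈ ball w ε := by
    simp [abs_of_pos hε, hε]
  have him : (w + (ε / 2 : ℝ) * I).im = ε / 2 := by simp [hVℝ w hw]
  linarith [hVℝ _ (hball hmem)]

theorem DiffContOnCl.exists_eqOn_const_of_im_eq_zero {u : ℂ → ℂ} {U : Set ℂ}
    (hU : Bornology.IsBounded U) (hUo : IsOpen U) (hUc : IsPreconnected U)
    (hu : DiffContOnCl ℂ u U) (hbd : ∀ z ∈ frontier U, (u z).im = 0) :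
    ∃ w, EqOn u (fun _ => w) (closure U) := by
  have him : ∀ z ∈ closure U, (u z).im = 0 := by
    intro z hz
    have hle : (u z).im ≤ 0 := by
      simpa using (hu.const_smul (-Complex.I)).re_le_of_forall_mem_frontier_re_le hU
        (C := 0) (fun z hz => by simp [hbd z hz]) hz
    have hge : -(u z).im ≤ 0 := by
      simpa using (hu.const_smul Complex.I).re_le_of_forall_mem_frontier_re_le hU
        (C := 0) (fun z hz => by simp [hbd z hz]) hz
    linarith
  obtain ⟨w, hw⟩ : ∃ w, ∀ z ∈ U, u z = w := by
    rcases (hu.differentiableOn.analyticOnNhd hUo).is_constant_or_isOpen hUc with hc | hopen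
    · exact hc
    · obtain rfl : U = ∅ := by
        simpa using Complex.eq_empty_of_isOpen_of_subset_im_eq_zero (hopen U subset_rfl hUo)
          (by rintro _ ⟨z, hz, rfl⟩; exact him z (subset_closure hz))
      simp
  exact ⟨w, EqOn.of_subset_closure hw hu.continuousOn continuousOn_const subset_closure
    subset_rfl⟩

theorem Complex.sub_one_sq_eq_neg_mul_normSq {ζ : ℂ} (hζ : ‖ζ‖ = 1) :
    (ζ - 1) ^ 2 = -ζ * Complex.normSq (ζ - 1) := by
  have h : ζ * conj ζ = 1 := by
    rw [Complex.mul_conj, Complex.normSq_eq_norm_sq, hζ]; norm_num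
  rw [← Complex.mul_conj, map_sub, map_one]
  linear_combination (ζ - 1) * h

/-- At `ζ = 1` and `K > 0` the value is `0` by the convention `x / 0 = 0`; this is the continuous
extension when `g = o((ζ - 1) ^ K)`. -/
def reflectionQuotient (K m : ℕ) (g : ℂ → ℂ) (ζ : ℂ) : ℂ :=
  (-1) ^ K * ζ ^ m * g ζ ^ 2 / (ζ - 1) ^ (2 * K)

theorem reflectionQuotient_eq_normSq_div {K m : ℕ} {g : ℂ → ℂ} {ζ : ℂ} (hζ : ‖ζ‖ = 1)
    (hg : ζ ^ m * g ζ = ζ ^ K * conj (g ζ)) :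
    reflectionQuotient K m g ζ =
      ((Complex.normSq (g ζ) / Complex.normSq (ζ - 1) ^ K : ℝ) : ℂ) := by
  have hζ0 : ζ ≠ 0 := by rintro rfl; simp at hζ
  have hnum : (-1) ^ K * ζ ^ m * g ζ ^ 2 = (-1) ^ K * ζ ^ K * Complex.normSq (g ζ) := by
    rw [← Complex.mul_conj]
    linear_combination (-1) ^ K * g ζ * hg
  have hden : (ζ - 1) ^ (2 * K) = (-1) ^ K * ζ ^ K * Complex.normSq (ζ - 1) ^ K := by
    rw [pow_mul, Complex.sub_one_sq_eq_neg_mul_normSq hζ, neg_mul, neg_pow, mul_pow]; ring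
  rw [reflectionQuotient, hnum, hden, mul_div_mul_left _ _ (by simp [hζ0])]
  push_cast; rfl

theorem reflectionQuotient_one {K m : ℕ} {g : ℂ → ℂ} (hg : g 1 = 0) :
    reflectionQuotient K m g 1 = 0 := by
  simp [reflectionQuotient, hg]

theorem tendsto_reflectionQuotient {K m : ℕ} {g : ℂ → ℂ} {s : Set ℂ}
    (hg : g =o[𝓝[s] 1] fun ζ => (ζ - 1) ^ K) :
    Tendsto (reflectionQuotient K m g) (𝓝[s] 1) (𝓝 0) := by
  have hsq : (fun ζ => g ζ ^ 2) =o[𝓝[s] 1] fun ζ => (ζ - 1) ^ (2 * K) := by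
    simpa [pow_mul', sq] using hg.mul hg
  have hpre : Tendsto (fun ζ : ℂ => (-1) ^ K * ζ ^ m) (𝓝[s] 1) (𝓝 ((-1) ^ K * 1 ^ m)) :=
    (Continuous.tendsto (by fun_prop) 1).mono_left nhdsWithin_le_nhds
  have := hpre.mul hsq.tendsto_div_nhds_zero
  rw [mul_zero] at this
  exact this.congr fun ζ => (mul_div_assoc _ _ _).symm

theorem diffContOnCl_reflectionQuotient {K m : ℕ} {g : ℂ → ℂ}
    (hg : DiffContOnCl ℂ g (ball 0 1)) (hg₁ : g =o[𝓝[closedBall 0 1] 1] fun ζ => (ζ - 1) ^ K) :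
    DiffContOnCl ℂ (reflectionQuotient K m g) (ball 0 1) := by
  have hden : ∀ ζ : ℂ, ζ ≠ 1 → (ζ - 1) ^ (2 * K) ≠ 0 := fun ζ hζ =>
    pow_ne_zero _ (sub_ne_zero.mpr hζ)
  refine DiffContOnCl.mk_ball ?_ fun ζ hζ => ?_
  · have := hg.differentiableOn
    refine DifferentiableOn.div (by fun_prop) (by fun_prop) fun ζ hζ => hden ζ ?_
    rintro rfl
    simp at hζ
  · rcases eq_or_ne ζ 1 with rfl | hζ1
    · rw [ContinuousWithinAt, reflectionQuotient_one (hg₁.apply_eq_zero_of_mem (by simp))]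
      exact tendsto_reflectionQuotient hg₁
    · have := hg.continuousOn_ball ζ hζ
      exact ContinuousWithinAt.div (by fun_prop) (by fun_prop) (hden ζ hζ1)

theorem eqOn_zero_of_eq_zpow_mul_conj {g : ℂ → ℂ} {k : ℤ} {K : ℕ} (hk : k ≤ K)
    (hg : DiffContOnCl ℂ g (ball 0 1))
    (hrefl : ∀ ζ : ℂ, ‖ζ‖ = 1 → g ζ = ζ ^ k * conj (g ζ))
    (hg₁ : g =o[𝓝[closedBall 0 1] 1] fun ζ => (ζ - 1) ^ K) :
    EqOn g 0 (closedBall 0 1) := by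
  obtain ⟨m, hm⟩ : ∃ m : ℕ, (m : ℤ) + k = K := ⟨(K - k).toNat, by omega⟩
  have hrefl' : ∀ ζ : ℂ, ‖ζ‖ = 1 → ζ ^ m * g ζ = ζ ^ K * conj (g ζ) := by
    intro ζ hζ
    have hζ0 : ζ ≠ 0 := by rintro rfl; simp at hζ
    conv_lhs => rw [hrefl ζ hζ]
    rw [← mul_assoc, ← zpow_natCast, ← zpow_add₀ hζ0, hm, zpow_natCast]
  obtain ⟨w, hw⟩ :=
    (diffContOnCl_reflectionQuotient (m := m) hg hg₁).exists_eqOn_const_of_im_eq_zero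
      isBounded_ball isOpen_ball (convex_ball 0 1).isPreconnected fun ζ hζ => by
        rw [frontier_ball _ one_ne_zero, mem_sphere_zero_iff_norm] at hζ
        rw [reflectionQuotient_eq_normSq_div hζ (hrefl' ζ hζ)]
        exact Complex.ofReal_im _
  rw [closure_ball _ one_ne_zero] at hw
  have hw0 : w = 0 := by
    have := hw (x := 1) (by simp)
    rwa [reflectionQuotient_one (hg₁.apply_eq_zero_of_mem (by simp)), eq_comm] at this
  have hg0 : EqOn g 0 (ball 0 1 ∩ {0}ᶜ) := by
    rintro ζ ⟨hζ, hζ0 : ζ ≠ 0⟩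
    have hζ1 : ζ - 1 ≠ 0 := sub_ne_zero.mpr (by rintro rfl; simp at hζ)
    simpa [reflectionQuotient, hw0, hζ1, hζ0] using hw (ball_subset_closedBall hζ)
  refine hg0.of_subset_closure hg.continuousOn_ball continuousOn_const
    (inter_subset_left.trans ball_subset_closedBall) ?_
  rw [← closure_ball (0 : ℂ) one_ne_zero]
  exact closure_minimal ((dense_compl_singleton 0).open_subset_closure_inter isOpen_ball)
    isClosed_closure

theorem Matrix.mulVec_eq_mul_star_mulVec_of_neg_mul_inv_mul_eq {ι R : Type*} [Fintype ι]
    [DecidableEq ι] [CommRing R] [StarRing R] [Nontrivial R] {Θ A : Matrix ι ι R} {d : ι → R}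
    (hd : IsUnit d) (hΘ : IsUnit Θ)
    (hfact : -(Θ * (A.map (starRingEnd R))⁻¹ * A) = diagonal d * Θ.map (starRingEnd R))
    {h : ι → R} (hh : A.map (starRingEnd R) *ᵥ h + A *ᵥ (fun i => starRingEnd R (h i)) = 0) :
    Θ *ᵥ h = fun i => d i * starRingEnd R ((Θ *ᵥ h) i) := by
  set Ā := A.map (starRingEnd R)
  have hĀ : IsUnit Ā.det := by
    rcases isEmpty_or_nonempty ι with hι | hι
    · simp
    by_contra hĀ
    rw [Ā.nonsing_inv_apply_not_isUnit hĀ, mul_zero, zero_mul, neg_zero] at hfact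
    exact not_isUnit_zero
      (hfact ▸ (isUnit_diagonal.mpr hd).mul (hΘ.map (starRingEnd R).mapMatrix))
  have hĀh : Ā *ᵥ h = -(A *ᵥ fun i => starRingEnd R (h i)) := eq_neg_of_add_eq_zero_left hh
  calc Θ *ᵥ h = (Θ * Ā⁻¹ * Ā) *ᵥ h := by rw [mul_assoc, Ā.nonsing_inv_mul hĀ, mul_one]
    _ = -(Θ * Ā⁻¹ * A) *ᵥ fun i => starRingEnd R (h i) := by
      rw [← mulVec_mulVec, hĀh, mulVec_neg, neg_mulVec, mulVec_mulVec]
    _ = diagonal d *ᵥ (Θ.map (starRingEnd R) *ᵥ fun i => starRingEnd R (h i)) := by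
      rw [hfact, mulVec_mulVec]
    _ = fun i => d i * starRingEnd R ((Θ *ᵥ h) i) := by
      ext i
      rw [mulVec_diagonal, RingHom.map_mulVec]
      rfl

theorem stmt14_general
    (n : ℕ)
    (Q S : Fin n → Fin n → Polynomial ℂ)
    (κ : Fin n × Fin 2 → ℤ)
    (Θ : ℂ → Matrix (Fin n × Fin 2) (Fin n × Fin 2) ℂ)
    (hΘcont : ∀ p q, ContinuousOn (fun ζ => Θ ζ p q) (Metric.closedBall 0 1))
    (hΘdiff : ∀ p q, DifferentiableOn ℂ (fun ζ => Θ ζ p q) (Metric.ball 0 1))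
    (hΘinv : ∀ ζ ∈ Metric.closedBall (0 : ℂ) 1, IsUnit (Θ ζ))
    (hfact : ∀ ζ : ℂ, ‖ζ‖ = 1 →
      -(Θ ζ * ((Gtilde2 n Q S ζ).map (starRingEnd ℂ))⁻¹ * Gtilde2 n Q S ζ) =
        Matrix.diagonal (fun p => ζ ^ κ p) * (Θ ζ).map (starRingEnd ℂ))
    (K : ℕ) (hK : IsGreatest (Set.range κ) (K : ℤ))
    (H : ℂ → Fin n × Fin 2 → ℂ)
    (hHdiff : ∀ p, DifferentiableOn ℂ (fun ζ => H ζ p) (Metric.ball 0 1))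
    (hHreg : ∀ p, ContDiffOn ℂ K (fun ζ => H ζ p) (Metric.closedBall 0 1))
    (hcirc : ∀ ζ : ℂ, ‖ζ‖ = 1 →
      ((Gtilde2 n Q S ζ).map (starRingEnd ℂ)).mulVec (H ζ) +
        (Gtilde2 n Q S ζ).mulVec (fun q => conj (H ζ q)) = 0)
    (hjet : ∀ p, ∀ j ≤ K,
      iteratedDerivWithin j (fun ζ => H ζ p) (Metric.closedBall 0 1) 1 = 0) :
    ∀ ζ ∈ Metric.closedBall (0 : ℂ) 1, H ζ = 0 := by
  have hΘH : ∀ p, EqOn (fun ζ => (Θ ζ *ᵥ H ζ) p) 0 (closedBall 0 1) := by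
    intro p
    refine eqOn_zero_of_eq_zpow_mul_conj (hK.2 ⟨p, rfl⟩) ?_ (fun ζ hζ => ?_) ?_
    · have hHcont := fun q => (hHreg q).continuousOn
      refine DiffContOnCl.mk_ball ?_ ?_ <;> simp only [mulVec, dotProduct] <;> fun_prop
    · have hζ0 : ζ ≠ 0 := by rintro rfl; simp at hζ
      exact congrFun (mulVec_eq_mul_star_mulVec_of_neg_mul_inv_mul_eq
        (Pi.isUnit_iff.mpr fun p => (zpow_ne_zero _ hζ0).isUnit)
        (hΘinv ζ (mem_closedBall_zero_iff.mpr hζ.le)) (hfact ζ hζ) (hcirc ζ hζ)) p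
    · refine isLittleO_mulVec_apply
        (fun p q => ((hΘcont p q) 1 (by simp)).tendsto.isBigO_one ℂ) (fun q => ?_) p
      exact isLittleO_pow_of_iteratedDerivWithin_eq_zero (convex_closedBall 0 1)
        (uniqueDiffOn_convex_of_isRCLikeNormedField (convex_closedBall 0 1)
          (interior_closedBall (0 : ℂ) one_ne_zero ▸ nonempty_ball.mpr one_pos))
        (by simp) (hHreg q) (hjet q)
  intro ζ hζ
  have hΘζ := (Θ ζ).isUnit_iff_isUnit_det.mp (hΘinv ζ hζ)
  simpa [mulVec_mulVec, nonsing_inv_mul _ hΘζ] using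
    congrArg ((Θ ζ)⁻¹ *ᵥ ·) (funext fun p => hΘH p hζ : Θ ζ *ᵥ H ζ = 0)

theorem stmt14
    (n D1 : ℕ) (hn : 1 ≤ n) (hD1 : 2 ≤ D1)
    (Q S : Fin n → Fin n → Polynomial ℂ)
    (hQdvd : ∀ i j, (Polynomial.X : Polynomial ℂ) ^ (D1 - 1) ∣ Q i j)
    (hQinv : ∀ ζ : ℂ, ‖ζ‖ = 1 → IsUnit (Matrix.of fun i j => (Q i j).eval ζ))
    (κ : Fin n × Fin 2 → ℤ)
    (Θ : ℂ → Matrix (Fin n × Fin 2) (Fin n × Fin 2) ℂ)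
    (hΘcont : ∀ p q, ContinuousOn (fun ζ => Θ ζ p q) (Metric.closedBall 0 1))
    (hΘdiff : ∀ p q, DifferentiableOn ℂ (fun ζ => Θ ζ p q) (Metric.ball 0 1))
    (hΘinv : ∀ ζ ∈ Metric.closedBall (0 : ℂ) 1, IsUnit (Θ ζ))
    (hfact : ∀ ζ : ℂ, ‖ζ‖ = 1 →
      -(Θ ζ * ((Gtilde2 n Q S ζ).map (starRingEnd ℂ))⁻¹ * Gtilde2 n Q S ζ) =
        Matrix.diagonal (fun p => ζ ^ κ p) * (Θ ζ).map (starRingEnd ℂ))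
    (K : ℕ) (hK : IsGreatest (Set.range κ) (K : ℤ))
    (hΘreg : ∀ p q, ContDiffOn ℂ K (fun ζ => Θ ζ p q) (Metric.closedBall 0 1))
    (H : ℂ → Fin n × Fin 2 → ℂ)
    (hHcont : ∀ p, ContinuousOn (fun ζ => H ζ p) (Metric.closedBall 0 1))
    (hHdiff : ∀ p, DifferentiableOn ℂ (fun ζ => H ζ p) (Metric.ball 0 1))
    (hHreg : ∀ p, ContDiffOn ℂ K (fun ζ => H ζ p) (Metric.closedBall 0 1))
    (hcirc : ∀ ζ : ℂ, ‖ζ‖ = 1 →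
      ((Gtilde2 n Q S ζ).map (starRingEnd ℂ)).mulVec (H ζ) +
        (Gtilde2 n Q S ζ).mulVec (fun q => conj (H ζ q)) = 0)
    (hjet : ∀ p, ∀ j ≤ K,
      iteratedDerivWithin j (fun ζ => H ζ p) (Metric.closedBall 0 1) 1 = 0) :
    ∀ ζ ∈ Metric.closedBall (0 : ℂ) 1, H ζ = 0 :=
  stmt14_general n Q S κ Θ hΘcont hΘdiff hΘinv hfact K hK H hHdiff hHreg hcirc hjet

end
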